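/- arXiv:1510.01833 — 2 statements merged into one kernel-verified Lean document; each statement's English description precedes it below -/
import Mathlib

section
/- The tensor product A × B of two graphs (possibly with loops) is bipartite if and only if at least one of A or B is bipartite. -/
structure LGraph where
  V : Type
  [fin : Fintype V]
  [dec : DecidableEq V]
  Adj : V → V → Prop
  symm : ∀ u v, Adj u v → Adj v u

attribute [instance] LGraph.fin LGraph.dec

/-- `f` is a graph homomorphism from `G` to `H`. -/
def LGraph.IsHom (G H : LGraph) (f : G.V → H.V) : Prop :=
  ∀ u v, G.Adj u v → H.Adj (f u) (f v)

/-- The number of homomorphisms from `G` to `H`. -/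
noncomputable def homCount (G H : LGraph) : ℕ :=
  Nat.card {f : G.V → H.V // G.IsHom H f}

/-- Tensor (categorical) product of graphs. -/
def tensor (A B : LGraph) : LGraph where
  V := A.V × B.V
  Adj p q := A.Adj p.1 q.1 ∧ B.Adj p.2 q.2
  symm _ _ h := ⟨A.symm _ _ h.1, B.symm _ _ h.2⟩

/-- Exponential graph `A ^ B`: vertices are functions `V(B) → V(A)`. -/
def expG (A B : LGraph) : LGraph where
  V := B.V → A.V
  Adj f g := ∀ u v, B.Adj u v → A.Adj (f u) (g v)
  symm f g h u v e := A.symm _ _ (h v u (B.symm _ _ e))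

/-- Disjoint union of graphs. -/
def disjUnion (A B : LGraph) : LGraph where
  V := A.V ⊕ B.V
  Adj u v := match u, v with
    | .inl a, .inl a' => A.Adj a a'
    | .inr b, .inr b' => B.Adj b b'
    | _, _ => False
  symm u v h := by
    cases u <;> cases v <;>
      first
        | exact A.symm _ _ h
        | exact B.symm _ _ h
        | exact h.elim

/-- Disjoint union of `k` copies of `H`. -/
def kCopies (k : ℕ) (H : LGraph) : LGraph where
  V := Fin k × H.V
  Adj p q := p.1 = q.1 ∧ H.Adj p.2 q.2
  symm _ _ h := ⟨h.1.symm, H.symm _ _ h.2⟩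

/-- Complete (loop-free) graph on `n` vertices. -/
def completeG (n : ℕ) : LGraph where
  V := Fin n
  Adj u v := u ≠ v
  symm _ _ h := h.symm

/-- Complete bipartite graph `K_{d,d}`. -/
def compBip (d : ℕ) : LGraph where
  V := Fin d ⊕ Fin d
  Adj u v := u.isLeft ≠ v.isLeft
  symm _ _ h := h.symm

/-- Two looped vertices with no other edges. -/
def l2 : LGraph where
  V := Fin 2
  Adj u v := u = v
  symm _ _ h := h.symm

/-- `G°`: add a loop at every vertex of `G`. -/
def loopify (G : LGraph) : LGraph where
  V := G.V
  Adj u v := u = v ∨ G.Adj u v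
  symm u v h := h.elim (fun e => Or.inl e.symm) (fun e => Or.inr (G.symm _ _ e))

/-- `l(H)`: induced subgraph of `H` on its looped vertices. -/
noncomputable def loopedPart (H : LGraph) : LGraph where
  V := {v : H.V // H.Adj v v}
  fin := Fintype.ofFinite _
  Adj u v := H.Adj u.1 v.1
  symm u v h := H.symm _ _ h

/-- A graph is bipartite if its vertices split into two parts with all edges between them. -/
def IsBipartite (G : LGraph) : Prop :=
  ∃ s : Set G.V, ∀ u v, G.Adj u v → (u ∈ s ↔ v ∉ s)

/-- Graph isomorphism. -/
def Iso (A B : LGraph) : Prop :=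
  ∃ e : A.V ≃ B.V, ∀ u v, A.Adj u v ↔ B.Adj (e u) (e v)

/-- `G` is `d`-regular (a loop contributes once to the degree). -/
def GRegular (G : LGraph) (d : ℕ) : Prop :=
  ∀ v : G.V, Nat.card {u : G.V // G.Adj v u} = d

/-- `G` is connected. -/
def GConnected (G : LGraph) : Prop :=
  Nonempty G.V ∧ ∀ u v : G.V, Relation.ReflTransGen G.Adj u v

/-- `H` has no clique of size `n`. -/
def CliqueFree (H : LGraph) (n : ℕ) : Prop :=
  ¬ ∃ f : Fin n → H.V, Function.Injective f ∧ ∀ i j, i ≠ j → H.Adj (f i) (f j)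

/-- `H` has no loops. -/
def LoopFree (H : LGraph) : Prop := ∀ v, ¬ H.Adj v v

/-- `H` is bipartite reducible: `hom(G,H)² ≤ hom(G × K₂, H)` for all `G`. -/
def BipRed (H : LGraph) : Prop :=
  ∀ G : LGraph, homCount G H ^ 2 ≤ homCount (tensor G (completeG 2)) H

/-!
A homomorphism into a bipartite graph pulls the bipartition back, which gives the easy direction
via the projections. Conversely, if `A` is not bipartite it has a loop at some `a` or (on its
loopless part) an odd closed walk at some `a`. A loop makes `b ↦ (a, b)` a homomorphism
`B → A × B`. An odd closed walk at `a`, run in `A × B` while alternating between the ends of an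
edge `b b'` of `B`, is an odd walk from `(a, b)` to `(a, b')`, so these lie on opposite sides;
hence `b ↦ (a, b)` pulls a bipartition of `A × B` back to one of `B`.
-/

namespace LGraph

def toSimpleGraph (G : LGraph) : SimpleGraph G.V where
  Adj u v := u ≠ v ∧ G.Adj u v
  symm := ⟨fun _ _ h => ⟨h.1.symm, G.symm _ _ h.2⟩⟩
  loopless := ⟨fun _ h => h.1 rfl⟩

end LGraph

theorem IsBipartite.of_isHom {G H : LGraph} (hH : IsBipartite H) {f : G.V → H.V}
    (hf : G.IsHom H f) : IsBipartite G := by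
  obtain ⟨s, hs⟩ := hH
  exact ⟨f ⁻¹' s, fun u v h => hs _ _ (hf u v h)⟩

theorem isBipartite_of_loopFree_of_colorable {G : LGraph} (hG : LoopFree G)
    (hc : G.toSimpleGraph.Colorable 2) : IsBipartite G := by
  obtain ⟨c⟩ := hc
  refine ⟨{v | c v = 0}, fun u v h => ?_⟩
  have hne : c u ≠ c v := c.valid ⟨fun e => hG u (e ▸ h), h⟩
  simp only [Set.mem_ofPred_eq]
  omega

theorem exists_loop_or_odd_closed_walk {G : LGraph} (hG : ¬ IsBipartite G) :
    (∃ a, G.Adj a a) ∨ ∃ a, ∃ p : G.toSimpleGraph.Walk a a, Odd p.length := by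
  by_contra! h
  refine hG (isBipartite_of_loopFree_of_colorable h.1 ?_)
  exact SimpleGraph.two_colorable_iff_forall_loop_even.2 fun a p =>
    Nat.not_odd_iff_even.1 (h.2 a p)

section Tensor

variable {A B : LGraph}

theorem tensor_mem_iff_of_walk {s : Set (A.V × B.V)}
    (hs : ∀ u v, (tensor A B).Adj u v → (u ∈ s ↔ v ∉ s)) {x y : A.V}
    (p : A.toSimpleGraph.Walk x y) {b b' : B.V} (hb : B.Adj b b') :
    (Even p.length → ((x, b) ∈ s ↔ (y, b) ∈ s)) ∧
      (Odd p.length → ((x, b) ∈ s ↔ (y, b') ∉ s)) := by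
  induction p generalizing b b' with
  | nil => simp
  | @cons x z y hxz q ih =>
    have hstep : (x, b) ∈ s ↔ (z, b') ∉ s := hs _ _ ⟨hxz.2, hb⟩
    obtain ⟨ihEven, ihOdd⟩ := ih (B.symm _ _ hb)
    simp only [SimpleGraph.Walk.length_cons, Nat.even_add_one, Nat.odd_add_one,
      Nat.not_even_iff_odd, Nat.not_odd_iff_even]
    exact ⟨fun h => by rw [hstep, ihOdd h, not_not], fun h => by rw [hstep, ihEven h]⟩

theorem IsBipartite.right_of_odd_closed_walk (hAB : IsBipartite (tensor A B)) {a : A.V}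
    (p : A.toSimpleGraph.Walk a a) (hp : Odd p.length) : IsBipartite B := by
  obtain ⟨s, hs⟩ := hAB
  exact ⟨{b | (a, b) ∈ s}, fun b b' hb => (tensor_mem_iff_of_walk hs p hb).2 hp⟩

end Tensor

theorem tensor_bipartite_iff (A B : LGraph) :
    IsBipartite (tensor A B) ↔ (IsBipartite A ∨ IsBipartite B) := by
  refine ⟨fun hAB => or_iff_not_imp_left.2 fun hA => ?_, ?_⟩
  · obtain ⟨a, haa⟩ | ⟨a, p, hp⟩ := exists_loop_or_odd_closed_walk hA
    · exact hAB.of_isHom (G := B) (f := fun b => (a, b)) fun _ _ h => ⟨haa, h⟩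
    · exact hAB.right_of_odd_closed_walk p hp
  · rintro (hA | hB)
    · exact hA.of_isHom (G := tensor A B) (f := Prod.fst) fun _ _ h => h.1
    · exact hB.of_isHom (G := tensor A B) (f := Prod.snd) fun _ _ h => h.2
end

section
/- If B is a bipartite graph, then for every graph H (possibly with loops), the exponential graph H^B is bipartite reducible; moreover for all G one has equality hom(G, H^B)^2 = hom(G × K2, H^B). -/
/-! Homomorphisms `G → H^B` are homomorphisms `G × B → H` (the exponential adjunction). For a
bipartite `B`, flipping the `K₂`-coordinate over one side of the bipartition turns `B × K₂` into
`B × l₂`, and a homomorphism out of `A × l₂` is a pair of homomorphisms out of `A`. Hence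
`hom(G × K₂, H^B) = hom(G × B × l₂, H) = hom(G × B, H)² = hom(G, H^B)²`. -/

theorem Iso.tensor_left {B B' : LGraph} (h : Iso B B') (A : LGraph) :
    Iso (tensor A B) (tensor A B') := by
  obtain ⟨e, he⟩ := h
  exact ⟨(Equiv.refl A.V).prodCongr e, fun p q => and_congr_right' (he p.2 q.2)⟩

theorem iso_tensor_assoc (A B C : LGraph) :
    Iso (tensor (tensor A B) C) (tensor A (tensor B C)) :=
  ⟨Equiv.prodAssoc A.V B.V C.V, fun _ _ => and_assoc⟩

theorem iso_tensor_comm (A B : LGraph) : Iso (tensor A B) (tensor B A) :=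
  ⟨Equiv.prodComm A.V B.V, fun _ _ => and_comm⟩

open Classical in
theorem IsBipartite.iso_tensor_completeG_two_l2 {B : LGraph} (hB : IsBipartite B) :
    Iso (tensor B (completeG 2)) (tensor B l2) := by
  obtain ⟨s, hs⟩ := hB
  let flip (u : B.V) : Fin 2 ≃ Fin 2 := if u ∈ s then Equiv.refl _ else Equiv.swap 0 1
  refine ⟨(Equiv.refl B.V).prodShear flip, fun ⟨u, i⟩ ⟨v, j⟩ => and_congr_right fun huv => ?_⟩
  change i ≠ j ↔ flip u i = flip v j
  have hne : ∀ i j : Fin 2, i ≠ j ↔ i = Equiv.swap 0 1 j := by decide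
  by_cases hu : u ∈ s
  · have hv : v ∉ s := (hs u v huv).1 hu
    rw [show flip u = Equiv.refl _ from if_pos hu, show flip v = Equiv.swap 0 1 from if_neg hv]
    exact hne i j
  · have hv : v ∈ s := not_not.1 fun hv => hu ((hs u v huv).2 hv)
    rw [show flip u = Equiv.swap 0 1 from if_neg hu, show flip v = Equiv.refl _ from if_pos hv]
    exact ne_comm.trans ((hne j i).trans eq_comm)

theorem homCount_congr {A A' : LGraph} (h : Iso A A') (H : LGraph) :
    homCount A H = homCount A' H := by
  obtain ⟨e, he⟩ := h
  refine Nat.card_congr ((e.arrowCongr (Equiv.refl H.V)).subtypeEquiv fun f => ⟨?_, ?_⟩)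
  · intro hf u v huv
    exact hf _ _ ((he _ _).2 (by simpa using huv))
  · intro hf u v huv
    simpa using hf (e u) (e v) ((he u v).1 huv)

theorem homCount_expG (G H B : LGraph) :
    homCount G (expG H B) = homCount (tensor G B) H :=
  Nat.card_congr <| (Equiv.curry G.V B.V H.V).symm.subtypeEquiv fun _ =>
    ⟨fun hf p q hpq => hf p.1 q.1 hpq.1 p.2 q.2 hpq.2,
      fun hf g g' hg u v huv => hf (g, u) (g', v) ⟨hg, huv⟩⟩

theorem isHom_tensor_l2_iff {A H : LGraph} (f : A.V × Fin 2 → H.V) :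
    (tensor A l2).IsHom H f ↔ ∀ i, A.IsHom H fun a => f (a, i) :=
  ⟨fun hf i a a' ha => hf (a, i) (a', i) ⟨ha, rfl⟩,
    fun hf ⟨a, i⟩ ⟨a', _⟩ ⟨ha, (hi : i = _)⟩ => hi ▸ hf i a a' ha⟩

theorem homCount_tensor_l2 (A H : LGraph) :
    homCount (tensor A l2) H = homCount A H ^ 2 :=
  calc homCount (tensor A l2) H = Nat.card (Fin 2 → {f : A.V → H.V // A.IsHom H f}) :=
        Nat.card_congr <| (((Equiv.prodComm A.V (Fin 2)).arrowCongr (Equiv.refl H.V)).trans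
          (Equiv.curry _ _ _)).subtypeEquiv (q := fun f => ∀ i, A.IsHom H (f i))
          isHom_tensor_l2_iff |>.trans Equiv.subtypePiEquivPi
    _ = homCount A H ^ 2 := by rw [Nat.card_fun, Nat.card_fin]; rfl

theorem bipRed_exp_bipartite (H B : LGraph) (hB : IsBipartite B) :
    BipRed (expG H B) ∧
    ∀ G : LGraph, homCount G (expG H B) ^ 2
      = homCount (tensor G (completeG 2)) (expG H B) := by
  have key (G : LGraph) : homCount G (expG H B) ^ 2
      = homCount (tensor G (completeG 2)) (expG H B) :=
    calc homCount G (expG H B) ^ 2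
        = homCount (tensor G B) H ^ 2 := by rw [homCount_expG]
      _ = homCount (tensor (tensor G B) l2) H := (homCount_tensor_l2 _ _).symm
      _ = homCount (tensor G (tensor B l2)) H := homCount_congr (iso_tensor_assoc _ _ _) _
      _ = homCount (tensor G (tensor B (completeG 2))) H :=
          (homCount_congr (hB.iso_tensor_completeG_two_l2.tensor_left G) _).symm
      _ = homCount (tensor G (tensor (completeG 2) B)) H :=
          homCount_congr ((iso_tensor_comm _ _).tensor_left G) _
      _ = homCount (tensor (tensor G (completeG 2)) B) H :=
          (homCount_congr (iso_tensor_assoc _ _ _) _).symm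
      _ = homCount (tensor G (completeG 2)) (expG H B) := (homCount_expG _ _ _).symm
  exact ⟨fun G => (key G).le, key⟩
end
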